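/- arXiv:2004.06310 — 2 statements merged into one kernel-verified Lean document; each statement's English description precedes it below -/
import Mathlib

section
/- Let m ≥ 5 be an integer and Q̃_{3,m} := 2·∫₀^∞ t³/(1 + t^m) dt. For every κ > 0 and R > 0 there exists a constant C > 0, depending only on κ, R, m, such that for all ε ∈ (0, 1/2): |∫_{B_R} |x′|²/(ε + κ·|x′|^m) dx′ − π·Q̃_{3,m}·κ^{−4/m}·ε^{−(1−4/m)}| ≤ C, where B_R ⊂ ℝ² is the open disc of radius R centered at the origin and dx′ is two-dimensional Lebesgue measure. -/
/-!
In polar coordinates the integral over the disc is `2π ∫₀^R r³/(ε + κ r^m) dr`, and the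
substitution `r = c t` with `κ c^m = ε` turns it into `(c⁴/ε) ∫₀^{R/c} t³/(1 + t^m) dt`, where
`c⁴/ε = κ^{-4/m} ε^{-(1-4/m)}`. Replacing the upper limit `R/c` by `∞` costs
`(c⁴/ε) ∫_{R/c}^∞ t³/(1 + t^m) dt ≤ (c⁴/ε) (R/c)^{4-m}/(m-4) = R^{4-m}/(κ(m-4))`, uniformly in `ε`.
-/

open MeasureTheory Set Real

theorem integral_ball_fin_two_fun_norm (g : ℝ → ℝ) {R : ℝ} (hR : 0 ≤ R) :
    ∫ x in Metric.ball (0 : EuclideanSpace ℝ (Fin 2)) R, g ‖x‖ = 2 * π * ∫ r in 0..R, r * g r := by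
  have hball : (Metric.ball (0 : EuclideanSpace ℝ (Fin 2)) R).indicator (fun x => g ‖x‖)
      = fun x => (Iio R).indicator g ‖x‖ := by
    ext x; simp [indicator]
  have hmul (y : ℝ) : y * (Iio R).indicator g y = (Iio R).indicator (fun r => r * g r) y :=
    (indicator_mul_right (Iio R) id g).symm
  rw [← integral_indicator measurableSet_ball, hball, integral_fun_norm_addHaar,
    finrank_euclideanSpace_fin, measureReal_def, EuclideanSpace.volume_ball_fin_two]
  simp only [ENNReal.ofReal_one, one_pow, one_mul, ENNReal.toReal_ofReal pi_pos.le, smul_eq_mul,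
    nsmul_eq_mul, Nat.add_one_sub_one, pow_one, hmul]
  rw [setIntegral_indicator measurableSet_Iio, Ioi_inter_Iio,
    intervalIntegral.integral_of_le hR, integral_Ioc_eq_integral_Ioo]
  push_cast; ring

section PowDivOneAddPow

variable {k m : ℕ}

theorem pow_div_one_add_pow_le_rpow {t : ℝ} (ht : 0 < t) :
    t ^ k / (1 + t ^ m) ≤ t ^ ((k : ℝ) - m) := by
  rw [rpow_sub ht, rpow_natCast, rpow_natCast]
  gcongr
  linarith

theorem continuousOn_pow_div_one_add_pow :
    ContinuousOn (fun t : ℝ => t ^ k / (1 + t ^ m)) (Ici 0) :=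
  continuousOn_id.pow k |>.div (continuousOn_const.add (continuousOn_id.pow m))
    fun t (ht : 0 ≤ t) => by positivity

theorem natCast_sub_natCast_lt_neg_one (hkm : k + 1 < m) : (k : ℝ) - m < -1 := by
  have : ((k + 1 : ℕ) : ℝ) < m := by exact_mod_cast hkm
  push_cast at this
  linarith

theorem integrableOn_Ioi_pow_div_one_add_pow (hkm : k + 1 < m) :
    IntegrableOn (fun t : ℝ => t ^ k / (1 + t ^ m)) (Ioi 0) := by
  have hnear : IntegrableOn (fun t : ℝ => t ^ k / (1 + t ^ m)) (Ioc 0 1) :=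
    (continuousOn_pow_div_one_add_pow.mono Icc_subset_Ici_self).integrableOn_Icc.mono_set
      Ioc_subset_Icc_self
  have hfar : IntegrableOn (fun t : ℝ => t ^ k / (1 + t ^ m)) (Ioi 1) := by
    refine (integrableOn_Ioi_rpow_of_lt (natCast_sub_natCast_lt_neg_one hkm) one_pos).mono'
      ((continuousOn_pow_div_one_add_pow.mono (Ioi_subset_Ici zero_le_one)).aestronglyMeasurable
        measurableSet_Ioi) ?_
    filter_upwards [ae_restrict_mem measurableSet_Ioi] with t (ht : 1 < t)
    rw [norm_of_nonneg (by positivity)]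
    exact pow_div_one_add_pow_le_rpow (by linarith)
  simpa only [Ioc_union_Ioi_eq_Ioi zero_le_one] using hnear.union hfar

theorem setIntegral_Ioi_pow_div_one_add_pow_le (hkm : k + 1 < m) {T : ℝ} (hT : 0 < T) :
    ∫ t in Ioi T, t ^ k / (1 + t ^ m) ≤ T ^ ((k + 1 : ℝ) - m) / (m - k - 1) := by
  have hlt := natCast_sub_natCast_lt_neg_one hkm
  calc ∫ t in Ioi T, t ^ k / (1 + t ^ m) ≤ ∫ t in Ioi T, t ^ ((k : ℝ) - m) :=
        setIntegral_mono_on ((integrableOn_Ioi_pow_div_one_add_pow hkm).mono_set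
          (Ioi_subset_Ioi hT.le)) (integrableOn_Ioi_rpow_of_lt hlt hT) measurableSet_Ioi
          fun t ht => pow_div_one_add_pow_le_rpow (hT.trans ht)
    _ = T ^ ((k + 1 : ℝ) - m) / (m - k - 1) := by
        rw [integral_Ioi_rpow_of_lt hlt hT, ← neg_div_neg_eq]
        congr 1 <;> ring_nf

variable {ε κ c : ℝ}

theorem integral_pow_div_add_mul_pow_eq (hc : 0 < c) (hcm : κ * c ^ m = ε) (R : ℝ) :
    ∫ r in 0..R, r ^ k / (ε + κ * r ^ m)
      = c ^ (k + 1) / ε * ∫ t in 0..R / c, t ^ k / (1 + t ^ m) := by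
  have hpt (r : ℝ) : r ^ k / (ε + κ * r ^ m) = c ^ k / ε * ((r / c) ^ k / (1 + (r / c) ^ m)) := by
    subst hcm
    rw [div_pow, div_pow]
    field_simp
  simp_rw [hpt, intervalIntegral.integral_const_mul,
    intervalIntegral.integral_comp_div (fun t => t ^ k / (1 + t ^ m)) hc.ne', zero_div, smul_eq_mul]
  ring

theorem abs_integral_pow_div_add_mul_pow_sub_le (hkm : k + 1 < m) (hκ : 0 < κ) (hc : 0 < c)
    (hcm : κ * c ^ m = ε) {R : ℝ} (hR : 0 < R) :
    |(∫ r in 0..R, r ^ k / (ε + κ * r ^ m)) - c ^ (k + 1) / ε * ∫ t in Ioi 0, t ^ k / (1 + t ^ m)|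
      ≤ R ^ ((k + 1 : ℝ) - m) / (κ * (m - k - 1)) := by
  have hε : 0 < ε := hcm ▸ by positivity
  have hRc : 0 < R / c := by positivity
  have hscale : c ^ (k + 1) / ε * (R / c) ^ ((k + 1 : ℝ) - m) = R ^ ((k + 1 : ℝ) - m) / κ := by
    rw [div_rpow hR.le hc.le, rpow_sub hc, ← Nat.cast_add_one, rpow_natCast, rpow_natCast, ← hcm]
    field_simp
  rw [integral_pow_div_add_mul_pow_eq hc hcm R,
    ← intervalIntegral.integral_Ioi_sub_Ioi (integrableOn_Ioi_pow_div_one_add_pow hkm) hRc.le,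
    mul_sub, sub_sub_cancel_left, abs_neg, abs_of_nonneg (mul_nonneg (by positivity)
      (setIntegral_nonneg measurableSet_Ioi fun t (ht : R / c < t) => by
        have : 0 < t := hRc.trans ht
        positivity))]
  calc c ^ (k + 1) / ε * ∫ t in Ioi (R / c), t ^ k / (1 + t ^ m)
      ≤ c ^ (k + 1) / ε * ((R / c) ^ ((k + 1 : ℝ) - m) / (m - k - 1)) := by
        gcongr
        exact setIntegral_Ioi_pow_div_one_add_pow_le hkm hRc
    _ = R ^ ((k + 1 : ℝ) - m) / (κ * (m - k - 1)) := by
        rw [← mul_div_assoc, hscale, div_div]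

end PowDivOneAddPow

theorem mul_div_rpow_one_div_pow {ε κ : ℝ} (hε : 0 ≤ ε) (hκ : 0 < κ) {m : ℕ} (hm : m ≠ 0) :
    κ * ((ε / κ) ^ (1 / m : ℝ)) ^ m = ε := by
  rw [← rpow_natCast, ← rpow_mul (by positivity), one_div_mul_cancel (by positivity), rpow_one]
  field_simp

theorem div_rpow_one_div_pow_four_div {ε κ : ℝ} (hε : 0 < ε) (hκ : 0 < κ) (m : ℕ) :
    ((ε / κ) ^ (1 / m : ℝ)) ^ 4 / ε = κ ^ (-(4 / (m : ℝ))) * ε ^ (-(1 - 4 / (m : ℝ))) := by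
  rw [← rpow_natCast, ← rpow_mul (by positivity), div_rpow hε.le hκ.le, rpow_neg hκ.le,
    neg_sub, rpow_sub hε, rpow_one]
  push_cast
  ring_nf

/-- Let `m ≥ 5` and `Q̃_{3,m} := 2∫₀^∞ t³/(1 + t^m) dt`. For every `κ > 0`, `R > 0` there is
`C > 0` (depending only on `κ, R, m`) such that for all `ε ∈ (0, 1/2)`:
`|∫_{B_R ⊂ ℝ²} |x′|²/(ε + κ·|x′|^m) dx′ − π·Q̃_{3,m}·κ^{−4/m}·ε^{−(1−4/m)}| ≤ C`. -/
theorem stmt7 (m : ℕ) (hm : 5 ≤ m) (κ R : ℝ) (hκ : 0 < κ) (hR : 0 < R) :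
    ∃ C > 0, ∀ ε : ℝ, 0 < ε → ε < 1/2 →
      |(∫ x in Metric.ball (0 : EuclideanSpace ℝ (Fin 2)) R, ‖x‖ ^ 2 / (ε + κ * ‖x‖ ^ m)) -
          Real.pi * (2 * ∫ t in Set.Ioi (0 : ℝ), t ^ 3 / (1 + t ^ m)) *
            κ ^ (-(4 / (m : ℝ))) * ε ^ (-(1 - 4 / (m : ℝ)))| ≤ C := by
  have hm4 : (0 : ℝ) < m - (3 : ℕ) - 1 := by
    have : (5 : ℝ) ≤ m := by exact_mod_cast hm
    push_cast; linarith
  refine ⟨2 * π * (R ^ (((3 : ℕ) : ℝ) + 1 - m) / (κ * (m - (3 : ℕ) - 1))), by positivity,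
    fun ε hε _ => ?_⟩
  set c := (ε / κ) ^ (1 / m : ℝ)
  have hc : 0 < c := by positivity
  have hcm : κ * c ^ m = ε := mul_div_rpow_one_div_pow hε.le hκ (by omega)
  have hpolar : ∫ x in Metric.ball (0 : EuclideanSpace ℝ (Fin 2)) R, ‖x‖ ^ 2 / (ε + κ * ‖x‖ ^ m)
      = 2 * π * ∫ r in 0..R, r ^ 3 / (ε + κ * r ^ m) := by
    rw [integral_ball_fin_two_fun_norm (fun r => r ^ 2 / (ε + κ * r ^ m)) hR.le]
    congr 1
    exact intervalIntegral.integral_congr fun r _ => by ring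
  rw [hpolar, mul_assoc _ (κ ^ _), ← div_rpow_one_div_pow_four_div hε hκ]
  calc _ = |2 * π * ((∫ r in 0..R, r ^ 3 / (ε + κ * r ^ m))
        - c ^ 4 / ε * ∫ t in Ioi 0, t ^ 3 / (1 + t ^ m))| := by
        congr 1
        ring
    _ ≤ _ := by
        rw [abs_mul, abs_of_pos two_pi_pos]
        gcongr
        exact abs_integral_pow_div_add_mul_pow_sub_le (by omega) hκ hc hcm hR
end

section
/- Let κ > 0, R > 0, and let m ≥ 2 be an integer. For ε ∈ (0, 1/2) consider the model narrow region Ω_R := {(x₁, x₂) ∈ ℝ² : |x₁| < R, −ε/2 − (κ/2)|x₁|^m < x₂ < ε/2 + (κ/2)|x₁|^m}, with δ(x₁) := ε + κ|x₁|^m, ū(x₁, x₂) := (x₂ + ε/2 + (κ/2)|x₁|^m)/δ(x₁), and f(t) := (1/2)(t − 1/2)² − 1/8. Define g(x₁, x₂) := f(ū(x₁, x₂))·δ′(x₁). Then there exists a constant C > 0, depending only on κ, m, R and not on ε, such that for all ε ∈ (0, 1/2): ∫_{Ω_R} |∇g|² dx ≤ C, where the integral is with respect to two-dimensional Lebesgue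 measure. -/
/-!
Put `τ = x₂ / δ(x₁) = ū - 1/2 ∈ (-1/2, 1/2)`. The function is `g = (τ²/2 - 1/8) δ'`, so
`∂₂g = τ δ' / δ` and `∂₁g = -τ² δ'² / δ + (τ²/2 - 1/8) δ''`, whence
`|∇g|² ≤ δ'⁴/(8δ²) + δ''²/32 + δ'²/(4δ²)`. Integrating in `x₂` over a slice of length `δ`
cancels one factor `1/δ`, and for `δ = ε + κ|x₁|^m` with `m ≥ 2` the quantities
`δ'²/δ ≤ κ m² |x₁|^(m-2)`, `δ'²`, `δ''²` and `δ` are bounded on `|x₁| ≤ R` independently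
of `ε ∈ (0, 1/2)`.
-/

open MeasureTheory

/-- Partial derivative in the first variable of a function of two real variables. -/
noncomputable def pd1 (g : ℝ → ℝ → ℝ) (x y : ℝ) : ℝ := deriv (fun s => g s y) x

/-- Partial derivative in the second variable of a function of two real variables. -/
noncomputable def pd2 (g : ℝ → ℝ → ℝ) (x y : ℝ) : ℝ := deriv (fun s => g x s) y

open Set Filter

section RegionBetween

variable {α : Type*} [MeasurableSpace α] {μ : Measure α} [SFinite μ]

theorem setIntegral_regionBetween_comp_fst {f g h : α → ℝ} {s : Set α} (hf : Measurable f)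
    (hg : Measurable g) (hs : MeasurableSet s) (hfg : ∀ x ∈ s, f x ≤ g x)
    (hh : IntegrableOn (fun p => h p.1) (regionBetween f g s) (μ.prod volume)) :
    ∫ p in regionBetween f g s, h p.1 ∂μ.prod volume = ∫ x in s, (g x - f x) * h x ∂μ := by
  have hreg := measurableSet_regionBetween hf hg hs
  rw [← integral_indicator hreg, integral_prod _ ((integrable_indicator_iff hreg).2 hh),
    ← integral_indicator hs]
  congr 1
  funext x
  by_cases hx : x ∈ s
  · have hslice : (fun y => (regionBetween f g s).indicator (fun p => h p.1) (x, y))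
        = (Ioo (f x) (g x)).indicator fun _ => h x := by
      funext y; simp [regionBetween, indicator, hx]
    rw [hslice, integral_indicator_const _ measurableSet_Ioo, indicator_of_mem hx,
      Real.volume_real_Ioo_of_le (hfg x hx), smul_eq_mul]
  · simp [regionBetween, indicator, hx]

end RegionBetween

noncomputable def corrector (D : ℝ → ℝ) (s t : ℝ) : ℝ :=
  (1 / 2 * (t / D s) ^ 2 - 1 / 8) * deriv D s

noncomputable def correctorGradBound (d d' d'' : ℝ) : ℝ :=
  d' ^ 4 / (8 * d ^ 2) + d'' ^ 2 / 32 + d' ^ 2 / (4 * d ^ 2)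

section Corrector

variable {D : ℝ → ℝ} {s d'' : ℝ}

theorem hasDerivAt_corrector_fst (t : ℝ) (hD : DifferentiableAt ℝ D s)
    (hD' : HasDerivAt (deriv D) d'' s) (hs : D s ≠ 0) :
    HasDerivAt (fun x => corrector D x t)
      (-(t ^ 2 * deriv D s ^ 2 / D s ^ 3) + (t ^ 2 / (2 * D s ^ 2) - 1 / 8) * d'') s := by
  have h := (((((hasDerivAt_const s t).fun_div hD.hasDerivAt hs).fun_pow 2).const_mul
    (1 / 2 : ℝ)).sub_const (1 / 8 : ℝ)).fun_mul hD'
  refine h.congr_deriv ?_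
  norm_num
  field_simp

theorem pd2_corrector (t : ℝ) (hs : D s ≠ 0) :
    pd2 (corrector D) s t = t * deriv D s / D s ^ 2 := by
  have h := ((((hasDerivAt_id' t).div_const (D s)).fun_pow 2).const_mul (1 / 2 : ℝ)).sub_const
    (1 / 8 : ℝ) |>.mul_const (deriv D s)
  unfold pd2 corrector
  rw [h.deriv]
  norm_num
  field_simp

theorem sq_add_sq_le_correctorGradBound {d d' d'' t : ℝ} (hd : 0 < d) (ht : |t| ≤ d / 2) :
    (-(t ^ 2 * d' ^ 2 / d ^ 3) + (t ^ 2 / (2 * d ^ 2) - 1 / 8) * d'') ^ 2 + (t * d' / d ^ 2) ^ 2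
      ≤ correctorGradBound d d' d'' := by
  set u := (t / d) ^ 2 with hu
  have hu0 : 0 ≤ u := sq_nonneg _
  have hu4 : u ≤ 1 / 4 := by
    rw [hu, div_pow, div_le_iff₀ (by positivity), ← sq_abs]
    nlinarith [abs_nonneg t]
  have hlhs : (-(t ^ 2 * d' ^ 2 / d ^ 3) + (t ^ 2 / (2 * d ^ 2) - 1 / 8) * d'') ^ 2
      + (t * d' / d ^ 2) ^ 2
      = (-(u * (d' ^ 2 / d)) + (u / 2 - 1 / 8) * d'') ^ 2 + u * (d' ^ 2 / d ^ 2) := by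
    rw [hu]; field_simp
  have hrhs : correctorGradBound d d' d''
      = (d' ^ 2 / d) ^ 2 / 8 + d'' ^ 2 / 32 + (d' ^ 2 / d ^ 2) / 4 := by
    rw [correctorGradBound]; field_simp
  rw [hlhs, hrhs]
  have hr : 0 ≤ d' ^ 2 / d ^ 2 := by positivity
  nlinarith [sq_nonneg (u * (d' ^ 2 / d) + (u / 2 - 1 / 8) * d''), mul_nonneg hu0 hu0,
    mul_nonneg (sq_nonneg (d' ^ 2 / d)) (mul_nonneg hu0 (by linarith : 0 ≤ 1 / 4 - u)),
    mul_nonneg (sq_nonneg d'') (mul_nonneg hu0 (by linarith : 0 ≤ 1 / 4 - u)),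
    mul_nonneg hr (by linarith : 0 ≤ 1 / 4 - u)]

theorem pd1_corrector_sq_add_pd2_sq_le (t : ℝ) (hD : DifferentiableAt ℝ D s)
    (hD' : HasDerivAt (deriv D) d'' s) (hs : 0 < D s) (ht : |t| ≤ D s / 2) :
    pd1 (corrector D) s t ^ 2 + pd2 (corrector D) s t ^ 2
      ≤ correctorGradBound (D s) (deriv D s) d'' := by
  rw [pd1, (hasDerivAt_corrector_fst t hD hD' hs.ne').deriv, pd2_corrector t hs.ne']
  exact sq_add_sq_le_correctorGradBound hs ht

end Corrector

theorem mul_correctorGradBound_le {d d' d'' a b c e : ℝ} (hd : 0 < d) (ha : d' ^ 2 ≤ a * d)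
    (hb : d' ^ 2 ≤ b) (hc : d'' ^ 2 ≤ c) (he : d ≤ e) :
    d * correctorGradBound d d' d'' ≤ a * b / 8 + e * c / 32 + a / 4 := by
  have hq : d' ^ 2 / d ≤ a := (div_le_iff₀ hd).2 ha
  have hq0 : 0 ≤ d' ^ 2 / d := by positivity
  have h1 : d' ^ 2 / d * d' ^ 2 ≤ a * b := mul_le_mul hq hb (sq_nonneg _) (hq0.trans hq)
  have h2 : d * d'' ^ 2 ≤ e * c := mul_le_mul he hc (sq_nonneg _) (hd.le.trans he)
  have heq : d * correctorGradBound d d' d''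
      = d' ^ 2 / d * d' ^ 2 / 8 + d * d'' ^ 2 / 32 + d' ^ 2 / d / 4 := by
    rw [correctorGradBound]; field_simp
  rw [heq]
  linarith

theorem setIntegral_corrector_energy_le {D D₂ : ℝ → ℝ} {s : Set ℝ} {a b c e : ℝ}
    (hD : ContDiff ℝ 1 D) (hpos : ∀ x, 0 < D x) (hD₂ : Continuous D₂)
    (hderiv : ∀ᵐ x, HasDerivAt (deriv D) (D₂ x) x) (hs : MeasurableSet s)
    (hsb : Bornology.IsBounded s) (ha : ∀ x ∈ s, deriv D x ^ 2 ≤ a * D x)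
    (hb : ∀ x ∈ s, deriv D x ^ 2 ≤ b) (hc : ∀ x ∈ s, D₂ x ^ 2 ≤ c) (he : ∀ x ∈ s, D x ≤ e) :
    ∫ p in regionBetween (fun x => -(D x / 2)) (fun x => D x / 2) s,
        pd1 (corrector D) p.1 p.2 ^ 2 + pd2 (corrector D) p.1 p.2 ^ 2
      ≤ volume.real s * (a * b / 8 + e * c / 32 + a / 4) := by
  set H := fun x => correctorGradBound (D x) (deriv D x) (D₂ x)
  set Ω := regionBetween (fun x => -(D x / 2)) (fun x => D x / 2) s
  have hDc : Continuous D := hD.continuous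
  have hD'c : Continuous (deriv D) := hD.continuous_deriv le_rfl
  have hHc : Continuous H := by
    unfold H correctorGradBound
    fun_prop (disch := intro x; have := hpos x; positivity)
  have hΩ : MeasurableSet Ω :=
    measurableSet_regionBetween (by fun_prop) (by fun_prop) hs
  have hΩK : Ω ⊆ closure s ×ˢ Icc (-(e / 2)) (e / 2) := by
    rintro ⟨x, y⟩ ⟨hx, hy⟩
    have hDe := he x hx
    exact ⟨subset_closure hx, by simp only at hy; constructor <;> linarith [hy.1, hy.2]⟩
  have hint : IntegrableOn (fun p : ℝ × ℝ => H p.1) Ω :=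
    ((hHc.comp continuous_fst).continuousOn.integrableOn_compact
      (hsb.isCompact_closure.prod isCompact_Icc)).mono_set hΩK
  have hderiv₂ : ∀ᵐ p : ℝ × ℝ, HasDerivAt (deriv D) (D₂ p.1) p.1 :=
    Measure.quasiMeasurePreserving_fst.ae hderiv
  calc ∫ p in Ω, pd1 (corrector D) p.1 p.2 ^ 2 + pd2 (corrector D) p.1 p.2 ^ 2
      ≤ ∫ p in Ω, H p.1 := by
        refine integral_mono_of_nonneg (Eventually.of_forall fun p => by positivity) hint ?_
        filter_upwards [ae_restrict_of_ae hderiv₂, ae_restrict_mem hΩ] with p hp hpΩ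
        refine pd1_corrector_sq_add_pd2_sq_le p.2 (hD.differentiable one_ne_zero _) hp (hpos _) ?_
        exact abs_le.2 ⟨by linarith [hpΩ.2.1], hpΩ.2.2.le⟩
    _ = ∫ x in s, (D x / 2 - -(D x / 2)) * H x :=
        setIntegral_regionBetween_comp_fst (by fun_prop) (by fun_prop) hs
          (fun x _ => by linarith [hpos x]) hint
    _ ≤ volume.real s * (a * b / 8 + e * c / 32 + a / 4) := by
        rw [mul_comm]
        refine (Real.le_norm_self _).trans
          (norm_setIntegral_le_of_norm_le_const hsb.measure_lt_top ?_)
        intro x hx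
        have hH : D x * H x ≤ a * b / 8 + e * c / 32 + a / 4 :=
          mul_correctorGradBound_le (hpos x) (ha x hx) (hb x hx) (hc x hx) (he x hx)
        have hH0 : 0 ≤ H x := by unfold H correctorGradBound; positivity
        rw [Real.norm_of_nonneg (by nlinarith [hpos x])]
        linarith

theorem hasDerivAt_abs_pow_add_two (n : ℕ) (x : ℝ) :
    HasDerivAt (fun x : ℝ => |x| ^ (n + 2)) ((n + 2) * (|x| ^ n * x)) x := by
  convert hasDerivAt_abs_rpow x (p := ((n + 2 : ℕ) : ℝ)) (by norm_cast; omega) using 1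
  · simp only [Real.rpow_natCast]
  · push_cast
    rw [add_sub_cancel_right, Real.rpow_natCast]
    ring

theorem hasDerivAt_abs_pow_mul_self (n : ℕ) {x : ℝ} (hx : x ≠ 0) :
    HasDerivAt (fun y : ℝ => |y| ^ n * y) ((n + 1) * |x| ^ n) x := by
  refine (((hasDerivAt_abs hx).fun_pow n).fun_mul (hasDerivAt_id' x)).congr_deriv ?_
  rcases n with _ | k
  · simp
  · rw [mul_assoc _ _ x, sign_mul_self]
    push_cast
    ring

theorem sq_abs_pow_mul_self (n : ℕ) (x : ℝ) : (|x| ^ n * x) ^ 2 = |x| ^ (2 * n + 2) := by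
  rw [mul_pow, ← sq_abs x, ← pow_mul, ← pow_add, mul_comm n 2]

noncomputable def modelWidth (ε κ : ℝ) (n : ℕ) (x : ℝ) : ℝ := ε + κ * |x| ^ (n + 2)

section ModelWidth

variable {ε κ R : ℝ} {n : ℕ}

theorem hasDerivAt_modelWidth (x : ℝ) :
    HasDerivAt (modelWidth ε κ n) (κ * (n + 2) * (|x| ^ n * x)) x :=
  (((hasDerivAt_abs_pow_add_two n x).const_mul κ).const_add ε).congr_deriv (by ring)

theorem deriv_modelWidth : deriv (modelWidth ε κ n) = fun x => κ * (n + 2) * (|x| ^ n * x) :=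
  funext fun x => (hasDerivAt_modelWidth x).deriv

theorem contDiff_modelWidth : ContDiff ℝ 1 (modelWidth ε κ n) :=
  contDiff_one_iff_deriv.2
    ⟨fun x => (hasDerivAt_modelWidth x).differentiableAt, by rw [deriv_modelWidth]; fun_prop⟩

theorem hasDerivAt_deriv_modelWidth {x : ℝ} (hx : x ≠ 0) :
    HasDerivAt (deriv (modelWidth ε κ n)) (κ * (n + 2) * ((n + 1) * |x| ^ n)) x := by
  rw [deriv_modelWidth]
  exact (hasDerivAt_abs_pow_mul_self n hx).const_mul _

theorem modelWidth_pos (hε : 0 < ε) (hκ : 0 ≤ κ) (x : ℝ) : 0 < modelWidth ε κ n x := by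
  unfold modelWidth; positivity

theorem sq_deriv_modelWidth_le_mul (hε : 0 ≤ ε) (hκ : 0 ≤ κ) {x : ℝ} (hx : |x| ≤ R) :
    deriv (modelWidth ε κ n) x ^ 2 ≤ κ * (n + 2) ^ 2 * R ^ n * modelWidth ε κ n x := by
  have hR : 0 ≤ R := (abs_nonneg x).trans hx
  calc deriv (modelWidth ε κ n) x ^ 2 = κ * (n + 2) ^ 2 * |x| ^ n * (κ * |x| ^ (n + 2)) := by
        rw [deriv_modelWidth, mul_pow, sq_abs_pow_mul_self]; ring
    _ ≤ κ * (n + 2) ^ 2 * R ^ n * modelWidth ε κ n x := by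
        unfold modelWidth; gcongr; linarith

theorem sq_deriv_modelWidth_le {x : ℝ} (hx : |x| ≤ R) :
    deriv (modelWidth ε κ n) x ^ 2 ≤ κ ^ 2 * (n + 2) ^ 2 * R ^ (2 * n + 2) := by
  rw [deriv_modelWidth, mul_pow, sq_abs_pow_mul_self, mul_pow]
  gcongr

theorem modelWidth_le (hε : ε ≤ 1 / 2) (hκ : 0 ≤ κ) {x : ℝ} (hx : |x| ≤ R) :
    modelWidth ε κ n x ≤ 1 / 2 + κ * R ^ (n + 2) := by
  unfold modelWidth; gcongr

end ModelWidth

theorem exists_setIntegral_corrector_modelWidth_le {κ R : ℝ} (n : ℕ) (hκ : 0 < κ)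
    (hR : 0 < R) :
    ∃ C > 0, ∀ ε, 0 < ε → ε ≤ 1 / 2 →
      ∫ p in regionBetween (fun x => -(modelWidth ε κ n x / 2))
          (fun x => modelWidth ε κ n x / 2) (Ioo (-R) R),
          pd1 (corrector (modelWidth ε κ n)) p.1 p.2 ^ 2
            + pd2 (corrector (modelWidth ε κ n)) p.1 p.2 ^ 2 ≤ C := by
  refine ⟨2 * R * (κ * (n + 2) ^ 2 * R ^ n * (κ ^ 2 * (n + 2) ^ 2 * R ^ (2 * n + 2)) / 8
    + (1 / 2 + κ * R ^ (n + 2)) * (κ * (n + 2) * ((n + 1) * R ^ n)) ^ 2 / 32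
    + κ * (n + 2) ^ 2 * R ^ n / 4), by positivity, fun ε hε hε2 => ?_⟩
  have habs {x : ℝ} (hx : x ∈ Ioo (-R) R) : |x| ≤ R := (abs_lt.2 hx).le
  refine (setIntegral_corrector_energy_le (c := (κ * (n + 2) * ((n + 1) * R ^ n)) ^ 2)
    contDiff_modelWidth (modelWidth_pos hε hκ.le) (by fun_prop)
    ((volume.ae_ne 0).mono fun x hx => hasDerivAt_deriv_modelWidth hx)
    measurableSet_Ioo (Metric.isBounded_Ioo (-R) R)
    (fun x hx => sq_deriv_modelWidth_le_mul hε.le hκ.le (habs hx))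
    (fun x hx => sq_deriv_modelWidth_le (habs hx))
    (fun x hx => by have := habs hx; gcongr)
    (fun x hx => modelWidth_le hε2 hκ.le (habs hx))).trans_eq ?_
  rw [Real.volume_real_Ioo_of_le (by linarith)]
  ring

/-- In the model narrow region with `δ(x₁) = ε + κ|x₁|^m`, the energy
`∫_{Ω_R} |∇(f(ū)·δ′)|² dx` of the corrector is bounded uniformly in `ε ∈ (0, 1/2)`. -/
theorem stmt16 (κ R : ℝ) (m : ℕ) (hκ : 0 < κ) (hR : 0 < R) (hm : 2 ≤ m) :
    ∃ C > 0, ∀ ε : ℝ, 0 < ε → ε < 1 / 2 →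
      (let δ : ℝ → ℝ := fun s => ε + κ * |s| ^ m
       let ub : ℝ → ℝ → ℝ := fun s t => (t + ε / 2 + κ / 2 * |s| ^ m) / δ s
       let f : ℝ → ℝ := fun t => (1 / 2) * (t - 1 / 2) ^ 2 - 1 / 8
       let g : ℝ → ℝ → ℝ := fun s t => f (ub s t) * deriv δ s
       (∫ p in {p : ℝ × ℝ | |p.1| < R ∧
            -ε / 2 - κ / 2 * |p.1| ^ m < p.2 ∧ p.2 < ε / 2 + κ / 2 * |p.1| ^ m},
          ((pd1 g p.1 p.2) ^ 2 + (pd2 g p.1 p.2) ^ 2)) ≤ C) := by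
  obtain ⟨n, rfl⟩ : ∃ n, m = n + 2 := ⟨m - 2, by omega⟩
  obtain ⟨C, hC, hbound⟩ := exists_setIntegral_corrector_modelWidth_le n hκ hR
  refine ⟨C, hC, fun ε hε hε2 => ?_⟩
  intro δ ub f g
  have hg : g = corrector (modelWidth ε κ n) := by
    funext s t
    have hw := (modelWidth_pos (n := n) hε hκ.le s).ne'
    have hub : ub s t - 1 / 2 = t / modelWidth ε κ n s := by
      simp only [ub, δ]
      rw [modelWidth] at hw ⊢
      field_simp
      ring
    simp only [g, f, corrector, hub]
    rfl
  have hΩ : {p : ℝ × ℝ | |p.1| < R ∧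
      -ε / 2 - κ / 2 * |p.1| ^ (n + 2) < p.2 ∧ p.2 < ε / 2 + κ / 2 * |p.1| ^ (n + 2)}
      = regionBetween (fun x => -(modelWidth ε κ n x / 2)) (fun x => modelWidth ε κ n x / 2)
        (Ioo (-R) R) := by
    ext p
    simp only [regionBetween, modelWidth, mem_ofPred_eq, mem_Ioo, abs_lt]
    ring_nf
  rw [hg, hΩ]
  exact hbound ε hε hε2.le
end
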